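/- arXiv:1209.5569 — 4 statements merged into one kernel-verified Lean document; each statement's English description precedes it below -/
import Mathlib

section
/- Let C be a covering of a finite nonempty set U. For every x ∈ U, the neighborhood N(x) belongs to the fixed point set of neighborhoods P, i.e., XL(N(x)) = N(x). -/
open Set

variable {U : Type*}

/-- The neighborhood of `x` w.r.t. the covering `C`: the intersection of all
blocks of `C` containing `x`. -/
def nbhd (C : Set (Set U)) (x : U) : Set U := ⋂₀ {K | K ∈ C ∧ x ∈ K}

/-- The sixth-type lower approximation. -/
def xL (C : Set (Set U)) (X : Set U) : Set U := {x | nbhd C x ⊆ X}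

/-- The fixed point set of neighborhoods. -/
def pFix (C : Set (Set U)) : Set (Set U) := {X | xL C X = X}

theorem mem_nbhd_self (C : Set (Set U)) (x : U) : x ∈ nbhd C x :=
  fun _ hK => hK.2

theorem nbhd_subset_of_mem {C : Set (Set U)} {x y : U} (hy : y ∈ nbhd C x) :
    nbhd C y ⊆ nbhd C x :=
  fun _ hz K hK => hz K ⟨hK.1, hy K hK⟩

theorem xL_subset (C : Set (Set U)) (X : Set U) : xL C X ⊆ X :=
  fun y hy => hy (mem_nbhd_self C y)

theorem nbhd_subset_xL_nbhd (C : Set (Set U)) (x : U) : nbhd C x ⊆ xL C (nbhd C x) :=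
  fun _ hy => nbhd_subset_of_mem hy

theorem stmt2_general (C : Set (Set U)) (x : U) :
    nbhd C x ∈ pFix C :=
  (xL_subset C (nbhd C x)).antisymm (nbhd_subset_xL_nbhd C x)

/-- for every `x ∈ U`, the neighborhood `N(x)` belongs to `P`. -/
theorem stmt2 [Fintype U] [Nonempty U] (C : Set (Set U))
    (hne : ∀ K ∈ C, K.Nonempty) (hcov : ⋃₀ C = Set.univ) (x : U) :
    nbhd C x ∈ pFix C :=
  stmt2_general C x
end

section
/- Let C be a covering of a finite nonempty set U and let K ∈ C be irreducible in C. Then K is a join-irreducible element of the lattice (F, ⊆): K ∈ F, and whenever K = X ∪ Y with X, Y ∈ F, then K = X or K = Y. -/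
open Set

variable {U : Type*}

/-- The first-type lower approximation w.r.t. the covering `C`. -/
def fL (C : Set (Set U)) (X : Set U) : Set U := ⋃₀ {K | K ∈ C ∧ K ⊆ X}

/-- The fixed point set of covering. -/
def fFix (C : Set (Set U)) : Set (Set U) := {X | fL C X = X}

/-- `K` is reducible in `C` if it is a union of some sets in `C \ {K}`. -/
def covReducible (C : Set (Set U)) (K : Set U) : Prop := ∃ S ⊆ C \ {K}, K = ⋃₀ S

/-- The minimal description of `x`. -/
def md (C : Set (Set U)) (x : U) : Set (Set U) :=
  {K | K ∈ C ∧ x ∈ K ∧ ∀ S ∈ C, x ∈ S → S ⊆ K → S = K}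

/-- `C` is unary if `|md x| = 1` for every `x`. -/
def isUnary (C : Set (Set U)) : Prop := ∀ x : U, ∃! K : Set U, K ∈ md C x

/-- The join-irreducible elements of the lattice `(fFix C, ⊆)`. -/
def jIrr (C : Set (Set U)) : Set (Set U) :=
  {A | A ∈ fFix C ∧ ∀ X ∈ fFix C, ∀ Y ∈ fFix C, A = X ∪ Y → A = X ∨ A = Y}

theorem fL_subset (C : Set (Set U)) (X : Set U) : fL C X ⊆ X :=
  sUnion_subset fun _ hA => hA.2

theorem mem_fFix_of_mem {C : Set (Set U)} {K : Set U} (hK : K ∈ C) : K ∈ fFix C :=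
  (fL_subset C K).antisymm (subset_sUnion_of_mem ⟨hK, subset_rfl⟩)

/-- A fixed point is the union of the members of `C` below it, so `K` is the union of the members
below `X` or below `Y`; none of them is `K`, as that would give `K ⊆ X ⊆ K` or `K ⊆ Y ⊆ K`. -/
theorem covReducible_of_eq_union {C : Set (Set U)} {K X Y : Set U}
    (hX : X ∈ fFix C) (hY : Y ∈ fFix C) (hXY : K = X ∪ Y) (hKX : K ≠ X) (hKY : K ≠ Y) :
    covReducible C K := by
  refine ⟨{A | A ∈ C ∧ A ⊆ X} ∪ {A | A ∈ C ∧ A ⊆ Y}, ?_, ?_⟩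
  · rintro A (⟨hAC, hAX⟩ | ⟨hAC, hAY⟩)
    · refine ⟨hAC, fun hAK => hKX ?_⟩
      rw [mem_singleton_iff] at hAK
      subst hAK
      exact hAX.antisymm (hXY ▸ subset_union_left)
    · refine ⟨hAC, fun hAK => hKY ?_⟩
      rw [mem_singleton_iff] at hAK
      subst hAK
      exact hAY.antisymm (hXY ▸ subset_union_right)
  · calc K = fL C X ∪ fL C Y := by rw [hX, hY, hXY]
      _ = _ := (sUnion_union _ _).symm

theorem stmt11_general (C : Set (Set U))
    (K : Set U) (hK : K ∈ C) (hirr : ¬ covReducible C K) :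
    K ∈ fFix C ∧
    ∀ X ∈ fFix C, ∀ Y ∈ fFix C, K = X ∪ Y → K = X ∨ K = Y := by
  refine ⟨mem_fFix_of_mem hK, fun X hX Y hY hXY => ?_⟩
  by_contra! hne
  exact hirr (covReducible_of_eq_union hX hY hXY hne.1 hne.2)

/-- every irreducible element `K` of `C` is a join-irreducible
element of the lattice `(F, ⊆)`. -/
theorem stmt11 [Fintype U] [Nonempty U] (C : Set (Set U))
    (hne : ∀ K ∈ C, K.Nonempty) (hcov : ⋃₀ C = Set.univ)
    (K : Set U) (hK : K ∈ C) (hirr : ¬ covReducible C K) :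
    K ∈ fFix C ∧
    ∀ X ∈ fFix C, ∀ Y ∈ fFix C, K = X ∪ Y → K = X ∨ K = Y :=
  stmt11_general C K hK hirr
end

section
/- Let C be a unary covering of a finite nonempty set U. Then for all X, Y ∈ F, the intersection X ∩ Y also belongs to F, i.e., FL(X ∩ Y) = X ∩ Y. -/
open Set

variable {U : Type*}

/-!
In a unary covering every point `x` has a single minimal block `M x`, and every block containing `x`
contains `M x` (its members are finite, so shrinking terminates). Hence `x ∈ FL(X)` exactly when
`M x ⊆ X`, a condition that is compatible with intersections.
-/

variable {C : Set (Set U)} {x : U} {K M X Y : Set U}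

lemma mem_fL_of_subset (hM : M ∈ C) (hMX : M ⊆ X) (hx : x ∈ M) : x ∈ fL C X :=
  ⟨M, ⟨hM, hMX⟩, hx⟩

lemma fL_mono (h : X ⊆ Y) : fL C X ⊆ fL C Y :=
  sUnion_mono fun _ hK => ⟨hK.1, hK.2.trans h⟩

lemma exists_mem_md_subset (hK : K ∈ C) (hfin : K.Finite) (hx : x ∈ K) :
    ∃ M ∈ md C x, M ⊆ K := by
  have hfin' : {S | S ∈ C ∧ x ∈ S ∧ S ⊆ K}.Finite :=
    hfin.finite_subsets.subset fun _ hS => hS.2.2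
  obtain ⟨M, hMK, hmin⟩ := hfin'.exists_le_minimal ⟨hK, hx, subset_rfl⟩
  refine ⟨M, ⟨hmin.prop.1, hmin.prop.2.1, fun S hS hxS hSM => ?_⟩, hMK⟩
  exact hmin.eq_of_le ⟨hS, hxS, hSM.trans hMK⟩ hSM

lemma subset_of_mem_md_of_mem_fL (hunary : isUnary C) (hfin : ∀ K ∈ C, K.Finite)
    (hM : M ∈ md C x) (hx : x ∈ fL C X) : M ⊆ X := by
  obtain ⟨K, ⟨hK, hKX⟩, hxK⟩ := hx
  obtain ⟨M', hM', hM'K⟩ := exists_mem_md_subset hK (hfin K hK) hxK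
  rw [(hunary x).unique hM hM']
  exact hM'K.trans hKX

lemma fL_inter_of_isUnary (hunary : isUnary C) (hfin : ∀ K ∈ C, K.Finite) :
    fL C (X ∩ Y) = fL C X ∩ fL C Y := by
  refine subset_antisymm (subset_inter (fL_mono inter_subset_left) (fL_mono inter_subset_right))
    fun x ⟨hxX, hxY⟩ => ?_
  obtain ⟨M, hM, -⟩ := hunary x
  exact mem_fL_of_subset hM.1
    (subset_inter (subset_of_mem_md_of_mem_fL hunary hfin hM hxX)
      (subset_of_mem_md_of_mem_fL hunary hfin hM hxY)) hM.2.1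

theorem stmt15_general [Fintype U] (C : Set (Set U))
    (hunary : isUnary C) :
    ∀ X ∈ fFix C, ∀ Y ∈ fFix C, fL C (X ∩ Y) = X ∩ Y := by
  intro X hX Y hY
  rw [fL_inter_of_isUnary hunary (fun K _ => K.toFinite), hX, hY]

/-- if `C` is unary then `F` is closed under binary
intersections: `FL(X ∩ Y) = X ∩ Y` for all `X, Y ∈ F`. -/
theorem stmt15 [Fintype U] [Nonempty U] (C : Set (Set U))
    (hne : ∀ K ∈ C, K.Nonempty) (hcov : ⋃₀ C = Set.univ)
    (hunary : isUnary C) :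
    ∀ X ∈ fFix C, ∀ Y ∈ fFix C, fL C (X ∩ Y) = X ∩ Y :=
  stmt15_general C hunary
end

section
/- Let C be a unary covering of a finite nonempty set U. For every X ∈ F, the set FL(Xᶜ) is the pseudocomplement of X in the lattice (F, ⊆): FL(Xᶜ) ∈ F, FL(X ∩ FL(Xᶜ)) = ∅ (indeed X ∩ FL(Xᶜ) = ∅), and for every Y ∈ F with FL(X ∩ Y) = ∅ one has Y ⊆ FL(Xᶜ). -/
open Set

variable {U : Type*}

/-!
`FL(Xᶜ)` is a fixed point disjoint from `X`, since `FL` is deflationary and idempotent. For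
maximality, let `Y ∈ F` with `FL(X ∩ Y) = ∅` and `y ∈ Y`. In a unary covering the unique
minimal description `M` of a point lies inside every block containing that point; hence
`M ⊆ Y`, and if some `z ∈ M` were in `X`, the minimal description of `z` would lie in both
`X` and `M ⊆ Y`, i.e. inside `FL(X ∩ Y) = ∅`, although it contains `z`. So `y ∈ M ⊆ FL(Xᶜ)`.
-/

variable {C : Set (Set U)} {A B K M : Set U} {x : U}

lemma fL_subset_s16 : fL C A ⊆ A :=
  sUnion_subset fun _ hK => hK.2

lemma subset_fL_of_mem (hK : K ∈ C) (hKA : K ⊆ A) : K ⊆ fL C A :=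
  subset_sUnion_of_mem ⟨hK, hKA⟩

lemma mem_fL_iff : x ∈ fL C A ↔ ∃ K ∈ C, K ⊆ A ∧ x ∈ K := by
  simp only [fL, mem_sUnion, mem_ofPred_eq, and_assoc]

lemma fL_mem_fFix : fL C A ∈ fFix C := by
  refine fL_subset_s16.antisymm fun x hx => ?_
  obtain ⟨K, hK, hKA, hxK⟩ := mem_fL_iff.mp hx
  exact subset_fL_of_mem hK (subset_fL_of_mem hK hKA) hxK

lemma fL_empty : fL C (∅ : Set U) = ∅ :=
  subset_empty_iff.mp fL_subset_s16

lemma inter_fL_compl_eq_empty : A ∩ fL C Aᶜ = ∅ :=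
  eq_empty_of_forall_notMem fun _ ⟨hA, hAc⟩ => fL_subset_s16 hAc hA

lemma exists_md_subset [Finite U] (hK : K ∈ C) (hx : x ∈ K) : ∃ M ∈ md C x, M ⊆ K := by
  obtain ⟨M, ⟨hMC, hxM, hMK⟩, hmin⟩ :=
    (toFinite {S | S ∈ C ∧ x ∈ S ∧ S ⊆ K}).exists_minimal ⟨K, hK, hx, subset_rfl⟩
  exact ⟨M, ⟨hMC, hxM, fun S hS hxS hSM =>
    hSM.antisymm (hmin ⟨hS, hxS, hSM.trans hMK⟩ hSM)⟩, hMK⟩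

lemma exists_md_subset_of_mem_fL [Finite U] (hx : x ∈ fL C A) : ∃ M ∈ md C x, M ⊆ A := by
  obtain ⟨K, hK, hKA, hxK⟩ := mem_fL_iff.mp hx
  obtain ⟨M, hM, hMK⟩ := exists_md_subset hK hxK
  exact ⟨M, hM, hMK.trans hKA⟩

namespace isUnary

lemma md_subset [Finite U] (hC : isUnary C) (hM : M ∈ md C x) (hK : K ∈ C) (hx : x ∈ K) :
    M ⊆ K := by
  obtain ⟨M', hM', hM'K⟩ := exists_md_subset hK hx
  rwa [(hC x).unique hM hM']

lemma subset_fL_compl [Finite U] (hC : isUnary C) (hA : A ∈ fFix C) (hB : B ∈ fFix C)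
    (hAB : fL C (A ∩ B) = ∅) : B ⊆ fL C Aᶜ := by
  intro y hy
  rw [← hB] at hy
  obtain ⟨M, hM, hMB⟩ := exists_md_subset_of_mem_fL hy
  have hMA : M ⊆ Aᶜ := by
    intro z hzM hzA
    rw [← hA] at hzA
    obtain ⟨N, hN, hNA⟩ := exists_md_subset_of_mem_fL hzA
    have hNAB : N ⊆ fL C (A ∩ B) :=
      subset_fL_of_mem hN.1 (subset_inter hNA ((hC.md_subset hN hM.1 hzM).trans hMB))
    rw [hAB] at hNAB
    exact hNAB hN.2.1
  exact subset_fL_of_mem hM.1 hMA hM.2.1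

end isUnary

theorem stmt16_general [Fintype U] (C : Set (Set U))
    (hunary : isUnary C) (X : Set U) (hX : X ∈ fFix C) :
    fL C Xᶜ ∈ fFix C ∧ X ∩ fL C Xᶜ = ∅ ∧ fL C (X ∩ fL C Xᶜ) = ∅ ∧
    ∀ Y ∈ fFix C, fL C (X ∩ Y) = ∅ → Y ⊆ fL C Xᶜ := by
  refine ⟨fL_mem_fFix, inter_fL_compl_eq_empty, ?_, fun Y hY => hunary.subset_fL_compl hX hY⟩
  rw [inter_fL_compl_eq_empty, fL_empty]

/-- if `C` is unary then, for every `X ∈ F`, `FL(Xᶜ)` is the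
pseudocomplement of `X` in the lattice `(F, ⊆)` (whose meet is
`(X, Y) ↦ FL(X ∩ Y)` and least element is `∅`). -/
theorem stmt16 [Fintype U] [Nonempty U] (C : Set (Set U))
    (hne : ∀ K ∈ C, K.Nonempty) (hcov : ⋃₀ C = Set.univ)
    (hunary : isUnary C) (X : Set U) (hX : X ∈ fFix C) :
    fL C Xᶜ ∈ fFix C ∧ X ∩ fL C Xᶜ = ∅ ∧ fL C (X ∩ fL C Xᶜ) = ∅ ∧
    ∀ Y ∈ fFix C, fL C (X ∩ Y) = ∅ → Y ⊆ fL C Xᶜ :=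
  stmt16_general C hunary X hX
end
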